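/- Let C₁ = {1,2,3,4}, C₂ = {4,5,6,7}, C₃ = {7,8,9,10}, C₄ = {10,11,12,13}, C₅ = {13,14,15,16}, C₆ = {16,17,18,1}, C₇ = {2,9,11,18}, C₈ = {3,5,12,14}, C₉ = {6,8,15,17} be the nine contexts of the Cabello 18-vector system, and let T be the simple graph on Fin 18 in which distinct i, j are adjacent iff i and j lie together in at least one context (i.e. T is the union of the nine 4-cliques determined by the contexts). Then T is a subgraph of the orthogonality graph KS⁴₁₈ of the eighteen Cabello vectors, T has 54 edges while KS⁴₁₈ has 63 edges, and the chromatic number of T equals 5. -/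

import Mathlib

/-- The orthogonality graph of a finite list of vectors in `ℝ^d`: distinct indices
are adjacent iff the corresponding vectors have dot product `0`. -/
def orthoGraph {m d : ℕ} (v : Fin m → Fin d → ℝ) : SimpleGraph (Fin m) where
  Adj i j := i ≠ j ∧ ∑ a, v i a * v j a = 0
  symm := by
    constructor
    rintro i j ⟨hne, hdot⟩
    refine ⟨hne.symm, ?_⟩
    rw [Finset.sum_congr rfl fun a _ => mul_comm (v j a) (v i a)]
    exact hdot
  loopless := by constructor; rintro i ⟨h, -⟩; exact h rfl

/-- The 18 Cabello vectors in `ℝ⁴`, indexed so that the label `i ∈ {1, …, 18}`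
(taken mod 18, so label `18` is the index `0`) corresponds to `vᵢ`; i.e. index `0`
carries `v₁₈ = (0,0,0,1)` and index `k` carries `v_k` for `1 ≤ k ≤ 17`. -/
def cabelloVecs : Fin 18 → Fin 4 → ℝ :=
  ![![0, 0, 0, 1], ![1, 0, 0, 0], ![0, 1, 0, 0], ![0, 0, 1, 1], ![0, 0, 1, -1],
    ![1, -1, 0, 0], ![1, 1, -1, -1], ![1, 1, 1, 1], ![1, -1, 1, -1], ![1, 0, -1, 0],
    ![0, 1, 0, -1], ![1, 0, 1, 0], ![1, 1, -1, 1], ![-1, 1, 1, 1], ![1, 1, 1, -1],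
    ![1, 0, 0, 1], ![0, 1, -1, 0], ![0, 1, 1, 0]]

/-- The nine contexts of the Cabello 18-vector Kochen–Specker system, as subsets of
`Fin 18` (labels taken mod 18, so the label `18` is `0`). -/
def cabelloContexts : Fin 9 → Finset (Fin 18) :=
  ![{1, 2, 3, 4}, {4, 5, 6, 7}, {7, 8, 9, 10}, {10, 11, 12, 13}, {13, 14, 15, 16},
    {16, 17, 18, 1}, {2, 9, 11, 18}, {3, 5, 12, 14}, {6, 8, 15, 17}]

/-- The graph `T` on `Fin 18`: distinct `i, j` adjacent iff they lie together in at
least one Cabello context (the union of the nine 4-cliques given by the contexts). -/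
def contextGraph : SimpleGraph (Fin 18) :=
  SimpleGraph.fromRel (fun i j => ∃ k : Fin 9, i ∈ cabelloContexts k ∧ j ∈ cabelloContexts k)

/-! The lower bound `χ(T) ≥ 5` is the Kochen–Specker parity argument. The nine contexts are
4-cliques of `T` and every vertex lies in exactly two of them. In a 4-colouring each context
contains exactly one vertex of colour `0`, so counting incidences gives `9 = 2 * #(colour 0)`. -/

open Finset

namespace SimpleGraph

variable {V : Type*} {G : SimpleGraph V}

theorem fromRel_exists_mem_le_iff {ι : Type*} (C : ι → Finset V) :
    fromRel (fun i j => ∃ k, i ∈ C k ∧ j ∈ C k) ≤ G ↔ ∀ k, G.IsClique (C k : Set V) := by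
  constructor
  · intro h k i hi j hj hne
    exact h ⟨hne, Or.inl ⟨k, hi, hj⟩⟩
  · rintro h i j ⟨hne, ⟨k, hi, hj⟩ | ⟨k, hj, hi⟩⟩ <;> exact h k hi hj hne

theorem Coloring.card_filter_eq_one_of_isNClique {α : Type*} [Fintype α] [DecidableEq α]
    (C : G.Coloring α) {s : Finset V} (hs : G.IsNClique (Fintype.card α) s) (a : α) :
    #{v ∈ s | C v = a} = 1 := by
  obtain ⟨v, hv, rfl⟩ := C.surjOn_of_card_le_isClique hs.isClique hs.card_eq.ge (Set.mem_univ a)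
  refine le_antisymm (card_le_one.2 ?_) (card_pos.2 ⟨v, mem_filter.2 ⟨hv, rfl⟩⟩)
  intro x hx y hy
  rw [mem_filter] at hx hy
  by_contra hne
  exact C.valid (hs.isClique hx.1 hy.1 hne) (hx.2.trans hy.2.symm)

theorem not_colorable_of_isNClique_cover [Fintype V] [DecidableEq V] {ι : Type*} [Fintype ι]
    {n r : ℕ} (hn : 0 < n) (C : ι → Finset V) (hC : ∀ k, G.IsNClique n (C k))
    (hr : ∀ v, #{k | v ∈ C k} = r) (hdvd : ¬ r ∣ Fintype.card ι) : ¬ G.Colorable n := by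
  rintro ⟨c⟩
  let a : Fin n := ⟨0, hn⟩
  have hcount := card_mul_eq_card_mul (fun k v => v ∈ C k) (s := univ) (t := {v | c v = a})
    (m := 1) (n := r) (fun k _ => ?_) (fun v _ => hr v)
  · rw [card_univ, mul_one] at hcount
    exact hdvd ⟨_, hcount.trans (mul_comm _ _)⟩
  · rw [← c.card_filter_eq_one_of_isNClique (by simpa using hC k) a]
    congr 1
    ext v
    simp [bipartiteAbove, and_comm]

end SimpleGraph

open SimpleGraph

theorem orthoGraph_intCast_adj_iff {m d : ℕ} (w : Fin m → Fin d → ℤ) {i j : Fin m} :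
    (orthoGraph fun i a => (w i a : ℝ)).Adj i j ↔ i ≠ j ∧ ∑ a, w i a * w j a = 0 :=
  and_congr_right' <| by dsimp only; exact_mod_cast Iff.rfl

instance {m d : ℕ} (w : Fin m → Fin d → ℤ) :
    DecidableRel (orthoGraph fun i a => (w i a : ℝ)).Adj :=
  fun _ _ => decidable_of_iff _ (orthoGraph_intCast_adj_iff w).symm

/-- Real dot products are not decidable; this integer copy of `cabelloVecs` makes adjacency in
the orthogonality graph checkable by `decide`. -/
def cabelloIntVecs : Fin 18 → Fin 4 → ℤ :=
  ![![0, 0, 0, 1], ![1, 0, 0, 0], ![0, 1, 0, 0], ![0, 0, 1, 1], ![0, 0, 1, -1],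
    ![1, -1, 0, 0], ![1, 1, -1, -1], ![1, 1, 1, 1], ![1, -1, 1, -1], ![1, 0, -1, 0],
    ![0, 1, 0, -1], ![1, 0, 1, 0], ![1, 1, -1, 1], ![-1, 1, 1, 1], ![1, 1, 1, -1],
    ![1, 0, 0, 1], ![0, 1, -1, 0], ![0, 1, 1, 0]]

theorem cabelloVecs_eq_intCast : cabelloVecs = fun i a => (cabelloIntVecs i a : ℝ) := by
  ext i a
  fin_cases i <;> fin_cases a <;> simp [cabelloVecs, cabelloIntVecs]

instance : DecidableRel contextGraph.Adj :=
  inferInstanceAs (DecidableRel (fromRel _).Adj)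

theorem contextGraph_le_orthoGraph : contextGraph ≤ orthoGraph cabelloVecs := by
  rw [cabelloVecs_eq_intCast]
  exact (fromRel_exists_mem_le_iff cabelloContexts).2 (by decide)

theorem ncard_edgeSet_contextGraph : contextGraph.edgeSet.ncard = 54 := by
  rw [← coe_edgeFinset, Set.ncard_coe_finset]
  decide

theorem ncard_edgeSet_orthoGraph_cabelloVecs : (orthoGraph cabelloVecs).edgeSet.ncard = 63 := by
  rw [cabelloVecs_eq_intCast, ← coe_edgeFinset, Set.ncard_coe_finset]
  decide

theorem isNClique_cabelloContexts (k : Fin 9) : contextGraph.IsNClique 4 (cabelloContexts k) :=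
  ⟨(fromRel_exists_mem_le_iff cabelloContexts).1 le_rfl k, by revert k; decide⟩

theorem card_cabelloContexts_containing (v : Fin 18) : #{k | v ∈ cabelloContexts k} = 2 := by
  revert v
  decide

def contextGraphColoring : contextGraph.Coloring (Fin 5) :=
  Coloring.mk ![0, 1, 2, 0, 3, 1, 0, 2, 1, 3, 0, 4, 2, 1, 3, 2, 4, 3] fun {v w} => by
    revert v w
    decide

theorem chromaticNumber_contextGraph : contextGraph.chromaticNumber = 5 := by
  rw [show (5 : ℕ∞) = (4 : ℕ) + 1 from rfl, chromaticNumber_eq_iff_colorable_not_colorable]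
  exact ⟨⟨contextGraphColoring⟩, not_colorable_of_isNClique_cover (by norm_num) cabelloContexts
    isNClique_cabelloContexts card_cabelloContexts_containing (by decide)⟩

/-- The context graph `T` of the Cabello system is a subgraph of
the orthogonality graph `KS⁴₁₈`; `T` has `54` edges while `KS⁴₁₈` has `63`; and the
chromatic number of `T` equals `5`. -/
theorem stmt_18 :
    contextGraph ≤ orthoGraph cabelloVecs ∧
    contextGraph.edgeSet.ncard = 54 ∧
    (orthoGraph cabelloVecs).edgeSet.ncard = 63 ∧
    contextGraph.chromaticNumber = 5 :=
  ⟨contextGraph_le_orthoGraph, ncard_edgeSet_contextGraph, ncard_edgeSet_orthoGraph_cabelloVecs,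
    chromaticNumber_contextGraph⟩
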